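/- Let φ be a 3-CNF formula with variables x_1,…,x_n and clauses c_1,…,c_m, where each clause c_j = l_j^1 ∨ l_j^2 ∨ l_j^3, and assume every variable occurs among the literals of φ both unnegated and negated. Construct the graph G(φ) as follows: for each variable x_i create three vertices X_i, X̄_i, Y_i that are pairwise adjacent (a triangle gadget); for each clause c_j create a vertex C_j adjacent exactly to the three literal vertices corresponding to the negations of its three literals; and create one extra vertex z adjacent to all 2n literal vertices X_1,…,X_n, X̄_1,…,X̄_n. If φ is satisfiable, then G(φ) has a well-connected set of size 2n + m (namely, for a satisfying assignment, the set consisting of the n literal vertices made true, all n gadget vertices Y_i, and all m clause vertices C_j). -/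

import Mathlib

/-- A set `M` of vertices of `G` is *well-connected* if (i) any two distinct
vertices of `M` are joined by a path in `G` avoiding all other vertices of `M`,
and (ii) the subgraph induced by the complement of `M` is connected
(the empty induced subgraph being regarded as connected). -/
def IsWCS {V : Type*} (G : SimpleGraph V) (M : Set V) : Prop :=
  (∀ u ∈ M, ∀ v ∈ M, u ≠ v →
    ∃ p : G.Walk u v, ∀ w ∈ p.support, w ∈ M → w = u ∨ w = v) ∧
  (G.induce Mᶜ).Preconnected

/-- Vertices of the graph `G(φ)` built from a 3-CNF formula `φ` with `n` variables and
`m` clauses: a literal vertex `lit i b` for each variable `i` and polarity `b`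
(`lit i true` is `Xᵢ`, `lit i false` is `X̄ᵢ`), a gadget vertex `gad i = Yᵢ` for each
variable, a clause vertex `cl j = Cⱼ` for each clause, and one extra vertex `z`. -/
inductive SatVtx (n m : ℕ) where
  | lit : Fin n → Bool → SatVtx n m
  | gad : Fin n → SatVtx n m
  | cl : Fin m → SatVtx n m
  | z : SatVtx n m
deriving DecidableEq

/-- The adjacency-generating relation of `G(φ)`, where the 3-CNF formula is encoded
by `c : Fin m → Fin 3 → Fin n × Bool` giving the three literals of each clause
(`(i, b)` is the literal `xᵢ` if `b = true` and `x̄ᵢ` if `b = false`):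
`Xᵢ, X̄ᵢ, Yᵢ` form a triangle; the clause vertex `Cⱼ` is adjacent exactly to the three
literal vertices corresponding to the negations of its literals; and `z` is adjacent
to all literal vertices. -/
def satRel {n m : ℕ} (c : Fin m → Fin 3 → Fin n × Bool) :
    SatVtx n m → SatVtx n m → Prop
  | .lit i _, .lit i' _ => i = i'
  | .lit i _, .gad i' => i = i'
  | .gad i, .lit i' _ => i = i'
  | .lit i b, .cl j => ∃ k : Fin 3, c j k = (i, !b)
  | .cl j, .lit i b => ∃ k : Fin 3, c j k = (i, !b)
  | .lit _ _, .z => True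
  | .z, .lit _ _ => True
  | _, _ => False

/-- The graph `G(φ)` constructed from the 3-CNF formula encoded by `c`. -/
def satGraph {n m : ℕ} (c : Fin m → Fin 3 → Fin n × Bool) : SimpleGraph (SatVtx n m) :=
  SimpleGraph.fromRel (satRel c)

section Aux
variable {n m : ℕ} {c : Fin m → Fin 3 → Fin n × Bool}

lemma adj_lit_z {i : Fin n} {b : Bool} :
    (satGraph c).Adj (SatVtx.lit i b) SatVtx.z := by
  simp [satGraph, SimpleGraph.fromRel_adj, satRel]

lemma adj_gad_lit {i : Fin n} {b : Bool} :
    (satGraph c).Adj (SatVtx.gad i) (SatVtx.lit i b) := by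
  simp [satGraph, SimpleGraph.fromRel_adj, satRel]

lemma adj_cl_lit {j : Fin m} {i : Fin n} {b : Bool} {k : Fin 3}
    (hk : c j k = (i, !b)) :
    (satGraph c).Adj (SatVtx.cl j) (SatVtx.lit i b) := by
  simp only [satGraph, SimpleGraph.fromRel_adj, satRel]
  exact ⟨by simp, Or.inl ⟨k, hk⟩⟩

/-- The candidate well-connected set for a satisfying assignment `a`. -/
def Mset {n : ℕ} (m : ℕ) (a : Fin n → Bool) : Set (SatVtx n m) := fun v =>
  match v with
  | .lit i b => b = a i
  | .gad _ => True
  | .cl _ => True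
  | .z => False

lemma mem_Mset_lit {a : Fin n → Bool} {i : Fin n} {b : Bool} :
    SatVtx.lit i b ∈ Mset m a ↔ b = a i := Iff.rfl

lemma mem_Mset_gad {a : Fin n → Bool} {i : Fin n} : SatVtx.gad i ∈ Mset m a := trivial

lemma mem_Mset_cl {a : Fin n → Bool} {j : Fin m} : SatVtx.cl j ∈ Mset m a := trivial

lemma z_not_mem_Mset {a : Fin n → Bool} : SatVtx.z ∉ Mset m a := id

/-- Every element of `Mset m a` has a short walk to `z` whose only vertex in
`Mset m a` is its starting point. -/
lemma exists_walk_to_z (a : Fin n → Bool)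
    (ha : ∀ j : Fin m, ∃ k : Fin 3, a (c j k).1 = (c j k).2)
    {u : SatVtx n m} (hu : u ∈ Mset m a) :
    ∃ W : (satGraph c).Walk u SatVtx.z,
      ∀ w ∈ W.support, w ∈ Mset m a → w = u := by
  match u with
  | .lit i b =>
      refine ⟨SimpleGraph.Walk.cons adj_lit_z SimpleGraph.Walk.nil, ?_⟩
      intro w hw hwM
      simp only [SimpleGraph.Walk.support_cons, SimpleGraph.Walk.support_nil,
        List.mem_cons, List.mem_singleton] at hw
      rcases hw with h | h | h
      · exact h
      · exact absurd (h ▸ hwM) z_not_mem_Mset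
      · exact absurd h (by simp)
  | .gad i =>
      refine ⟨SimpleGraph.Walk.cons (adj_gad_lit (b := !(a i)))
        (SimpleGraph.Walk.cons adj_lit_z SimpleGraph.Walk.nil), ?_⟩
      intro w hw hwM
      simp only [SimpleGraph.Walk.support_cons, SimpleGraph.Walk.support_nil,
        List.mem_cons, List.mem_singleton] at hw
      rcases hw with h | h | h | h
      · exact h
      · subst h; rw [mem_Mset_lit] at hwM; simp at hwM
      · exact absurd (h ▸ hwM) z_not_mem_Mset
      · exact absurd h (by simp)
  | .cl j =>
      obtain ⟨k, hk⟩ := ha j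
      have hck : c j k = ((c j k).1, !(!(c j k).2)) := by simp
      refine ⟨SimpleGraph.Walk.cons (adj_cl_lit hck)
        (SimpleGraph.Walk.cons adj_lit_z SimpleGraph.Walk.nil), ?_⟩
      intro w hw hwM
      simp only [SimpleGraph.Walk.support_cons, SimpleGraph.Walk.support_nil,
        List.mem_cons, List.mem_singleton] at hw
      rcases hw with h | h | h | h
      · exact h
      · subst h; rw [mem_Mset_lit] at hwM; rw [hk] at hwM; simp at hwM
      · exact absurd (h ▸ hwM) z_not_mem_Mset
      · exact absurd h (by simp)
  | .z => exact absurd hu z_not_mem_Mset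

end Aux

/-- If a 3-CNF formula `φ` (in which every variable occurs both unnegated and negated)
is satisfiable, then the graph `G(φ)` has a well-connected set of size `2n + m`. -/
theorem sat_implies_wcs {n m : ℕ} (c : Fin m → Fin 3 → Fin n × Bool)
    (hocc : ∀ (i : Fin n) (b : Bool), ∃ (j : Fin m) (k : Fin 3), c j k = (i, b))
    (hsat : ∃ a : Fin n → Bool, ∀ j : Fin m, ∃ k : Fin 3, a (c j k).1 = (c j k).2) :
    ∃ M : Set (SatVtx n m), IsWCS (satGraph c) M ∧ Nat.card M = 2 * n + m := by
  obtain ⟨a, ha⟩ := hsat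
  refine ⟨Mset m a, ⟨?_, ?_⟩, ?_⟩
  · -- condition (i)
    intro u hu v hv huv
    obtain ⟨Wu, hWu⟩ := exists_walk_to_z (c := c) a ha hu
    obtain ⟨Wv, hWv⟩ := exists_walk_to_z (c := c) a ha hv
    refine ⟨Wu.append Wv.reverse, ?_⟩
    intro w hw hwM
    rw [SimpleGraph.Walk.mem_support_append_iff] at hw
    rcases hw with h | h
    · exact Or.inl (hWu w h hwM)
    · rw [SimpleGraph.Walk.support_reverse, List.mem_reverse] at h
      exact Or.inr (hWv w h hwM)
  · -- condition (ii): the complement is connected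
    have hz : SatVtx.z ∈ (Mset m a)ᶜ := z_not_mem_Mset
    have key : ∀ x : ((Mset m a)ᶜ : Set (SatVtx n m)),
        ((satGraph c).induce (Mset m a)ᶜ).Reachable x ⟨SatVtx.z, hz⟩ := by
      rintro ⟨x, hx⟩
      match x with
      | .lit i b =>
          exact SimpleGraph.Adj.reachable
            (by exact adj_lit_z : ((satGraph c).induce (Mset m a)ᶜ).Adj
              ⟨SatVtx.lit i b, hx⟩ ⟨SatVtx.z, hz⟩)
      | .gad i => exact absurd mem_Mset_gad hx
      | .cl j => exact absurd mem_Mset_cl hx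
      | .z => exact SimpleGraph.Reachable.refl _
    intro x y
    exact (key x).trans (key y).symm
  · -- cardinality
    classical
    have hbij : Function.Bijective
        (fun x : Fin n ⊕ Fin n ⊕ Fin m => (match x with
          | Sum.inl i => ⟨SatVtx.lit i (a i), rfl⟩
          | Sum.inr (Sum.inl i) => ⟨SatVtx.gad i, mem_Mset_gad⟩
          | Sum.inr (Sum.inr j) => ⟨SatVtx.cl j, mem_Mset_cl⟩ :
            (Mset m a : Set (SatVtx n m)))) := by
      constructor
      · rintro (i | i | j) (i' | i' | j') h <;>
          simp only [Subtype.ext_iff, Subtype.mk.injEq, SatVtx.lit.injEq, SatVtx.gad.injEq,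
            SatVtx.cl.injEq] at h <;> simp_all
      · rintro ⟨v, hv⟩
        match v with
        | .lit i b =>
            rw [mem_Mset_lit] at hv
            exact ⟨Sum.inl i, by simp [hv]⟩
        | .gad i => exact ⟨Sum.inr (Sum.inl i), rfl⟩
        | .cl j => exact ⟨Sum.inr (Sum.inr j), rfl⟩
        | .z => exact absurd hv z_not_mem_Mset
    have := Nat.card_eq_of_bijective _ hbij
    rw [← this]
    simp [Nat.card_sum]
    ring
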